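/- For every ordinal α < ε₀: if F_α is total then H_{ω^{3+α}} is total, and F_α(x) ≤ H_{ω^{3+α}}(x+3) ≤ F_α(x+4) for all x (whenever defined). -/

import Mathlib

/-- Tree ordinals as formal terms: `0`, and `ω^{t₁} + ⋯ + ω^{tₙ}` for tree
ordinals `t₁, …, tₙ` (no ordering condition on the exponents).
`oadd e r` denotes `r + ω^e`, i.e. `e` is the exponent of the **rightmost**
summand and `r` collects the summands to its left. -/
inductive T : Type where
  | zero : T
  | oadd : T → T → T
deriving DecidableEq

namespace T

/-- The induced ordinal `o(t)` of a tree term (ordinal arithmetic, so smaller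
summands may be absorbed). -/
noncomputable def o : T → Ordinal.{0}
  | zero => 0
  | oadd e r => o r + Ordinal.omega0 ^ o e

/-- The norm: `N0 = 0`, `N(ω^α + β) = 1 + Nα + Nβ`. -/
def norm : T → ℕ
  | zero => 0
  | oadd e r => 1 + norm e + norm r

/-- `rep e r x = r + ω^e · x`. -/
def rep (e r : T) : ℕ → T
  | 0 => r
  | x + 1 => oadd e (rep e r x)

/-- The standard fundamental sequences on tree terms:
`0[x] = 0`, `1[x] = 0`, `(t+1)[x] = t`, `(t + ω^{s+1})[x] = t + ω^s · x`,
`(t + ω^λ)[x] = t + ω^{λ[x]}` for a limit term `λ`. -/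
def fund : T → ℕ → T
  | zero, _ => zero
  | oadd zero r, _ => r
  | oadd (oadd zero e') r, x => rep e' r x
  | oadd (oadd (oadd a b) e') r, x => oadd (fund (oadd (oadd a b) e') x) r

/-- Auxiliary sum for the ordinal correction function: `crSum t m` adds
`N(ω^{tᵢ})` for each summand `ω^{tᵢ}` of `t` whose exponent is smaller (as an
ordinal) than some exponent strictly to its right (where `m` is the maximum of
the exponents lying to the right of all of `t`). -/
noncomputable def crSum : T → Ordinal.{0} → ℕ
  | zero, _ => 0
  | oadd e r, m => (if o e < m then 1 + norm e else 0) + crSum r (max m (o e))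

mutual
/-- The ordinal correction function `Cr`:
`Cr(0) = 0` and `Cr(t) = Σ {N(ω^{tᵢ}) : tᵢ < tⱼ for some j > i} + max Cr(tᵢ)`. -/
noncomputable def cr : T → ℕ
  | zero => 0
  | oadd e r => crSum (oadd e r) 0 + max (cr e) (crMax r)

/-- Maximum of `Cr` over the exponents of a term. -/
noncomputable def crMax : T → ℕ
  | zero => 0
  | oadd e r => max (cr e) (crMax r)
end

/-- Cantor normal form predicate: exponents are (weakly) increasing from the
rightmost summand leftwards, and all exponents are themselves in CNF.  Terms
satisfying `NF` faithfully represent the ordinals below `ε₀`. -/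
def NF : T → Prop
  | zero => True
  | oadd e r => NF e ∧ NF r ∧ (match r with | zero => True | oadd f _ => o e ≤ o f)

/-- A term is a limit iff its rightmost summand has nonzero exponent. -/
def IsLim : T → Prop
  | oadd (oadd _ _) _ => True
  | _ => False

/-- Drop rightmost summands with exponent of ordinal value `< b`
(the absorption performed by ordinal addition). -/
noncomputable def cleanup (b : Ordinal.{0}) : T → T
  | zero => zero
  | oadd f s => if o f < b then cleanup b s else oadd f s

/-- Normalization of a tree term to the Cantor normal form of its induced
ordinal: `toNF t` is `NF`, and `o (toNF t) = o t`. -/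
noncomputable def toNF : T → T
  | zero => zero
  | oadd e r => oadd (toNF e) (cleanup (o e) (toNF r))

/-- `repOne r x = r + x`. -/
def repOne (r : T) : ℕ → T
  | 0 => r
  | x + 1 => oadd zero (repOne r x)

/-- `repPair s r x = r + (ω^s + 1) · x`. -/
def repPair (s r : T) : ℕ → T
  | 0 => r
  | x + 1 => oadd zero (oadd s (repPair s r x))

/-- The worm-induced fundamental sequences `⟦·⟧` on tree terms:
`0⟦x⟧ = 0`, `(t+1)⟦x⟧ = t`, `(t+ω)⟦x⟧ = t + x`,
`(t + ω^{s+1})⟦x⟧ = t + (ω^s + 1) · x` for `s ≠ 0`, and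
`(t + ω^λ)⟦x⟧ = t + ω^{λ⟦x⟧}` for a limit term `λ`. -/
def fundW : T → ℕ → T
  | zero, _ => zero
  | oadd zero r, _ => r
  | oadd (oadd zero zero) r, x => repOne r x
  | oadd (oadd zero (oadd a b)) r, x => repPair (oadd a b) r x
  | oadd (oadd (oadd a b) e') r, x => oadd (fundW (oadd (oadd a b) e') x) r

end T

/-- Graph of the Hardy functions (with the standard fundamental sequences):
`H_0(x) = x`, `H_{t+1}(x) = H_t(x+1)`, `H_t(x) = H_{t[x]}(x)` for limit `t`.
`HG t x y` means `H_t(x)` is defined with value `y`. -/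
inductive HG : T → ℕ → ℕ → Prop where
  | zero (x) : HG T.zero x x
  | succ {r x y} : HG r (x + 1) y → HG (T.oadd T.zero r) x y
  | lim {e r x y} (he : e ≠ T.zero) :
      HG (T.fund (T.oadd e r) x) x y → HG (T.oadd e r) x y

/-- The superexponential: `2^x_0 = x`, `2^x_{n+1} = 2^(2^x_n)`. -/
def superexp (x : ℕ) : ℕ → ℕ
  | 0 => x
  | n + 1 => 2 ^ superexp x n

mutual
/-- Graph of the fast-growing hierarchy: `F_0(x) = 2^x_x`,
`F_{α+1}(x) = F_α^{(x)}(x)`, `F_λ(x) = F_{λ[x]}(x)` for limit `λ`. -/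
inductive FG : T → ℕ → ℕ → Prop where
  | zero (x) : FG T.zero x (superexp x x)
  | succ {t x y} : FGit t x x y → FG (T.oadd T.zero t) x y
  | lim {e t x y} (he : e ≠ T.zero) :
      FG (T.fund (T.oadd e t) x) x y → FG (T.oadd e t) x y

/-- `FGit t k z y` means `F_t^{(k)}(z) = y`. -/
inductive FGit : T → ℕ → ℕ → ℕ → Prop where
  | zero (t z) : FGit t 0 z z
  | succ {t k z w y} : FGit t k z w → FG t w y → FGit t (k + 1) z y
end

/-- Formal addition of tree terms: `addT u v = u + v` (concatenation of the
lists of summands, `v` to the right). -/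
def addT : T → T → T
  | u, T.zero => u
  | u, T.oadd e r => T.oadd e (addT u r)

/-- The tree term `3`. -/
def three : T := T.oadd T.zero (T.oadd T.zero (T.oadd T.zero T.zero))

/-- The Cantor normal form term for the ordinal `ω^{3+α}`. -/
noncomputable def wexp3 (t : T) : T := T.oadd (T.toNF (addT three t)) T.zero

/-!
Induction on `α` along fundamental sequences. Writing `β = 3 + α`, the Hardy function
`H_{ω^β}` obeys the recursion of `F_α` up to a shift of the argument:
`H_{ω^{β+1}}(z) = H_{ω^β}^{(z)}(z)`, and `(3 + α)[n] = 3 + α[n]` for limits `α ≠ ω`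
(for `α = ω` the index is shifted by `3`). At the base, `H_{ω^3}(z)` is the `z`-fold iterate of
`w ↦ 2^w · w`, which lies between towers of height `z` and `z + 1`. The shifts in index and
argument are absorbed by monotonicity of both hierarchies along fundamental sequences, which
rests on Bachmann's property.
-/

namespace T

open Ordinal Relation

@[simp] lemma o_zero : o zero = 0 := rfl

@[simp] lemma o_oadd (e r : T) : o (oadd e r) = o r + ω ^ o e := rfl

lemma o_pos {t : T} (h : t ≠ zero) : 0 < o t := by
  cases t with
  | zero => exact absurd rfl h
  | oadd e r => exact (opow_pos _ omega0_pos).trans_le le_add_self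

lemma ne_zero_of_o_le {a b : T} (hb : b ≠ zero) (h : o b ≤ o a) : a ≠ zero := by
  rintro rfl
  exact (o_pos hb).not_ge h

@[simp] lemma fund_oadd_zero (r : T) (x : ℕ) : fund (oadd zero r) x = r := rfl

@[simp] lemma fund_oadd_succ (e r : T) (x : ℕ) : fund (oadd (oadd zero e) r) x = rep e r x := rfl

lemma fund_oadd_lim {e : T} (he : e ≠ zero) (e' r : T) (x : ℕ) :
    fund (oadd (oadd e e') r) x = oadd (fund (oadd e e') x) r := by
  cases e with
  | zero => exact absurd rfl he
  | oadd => rfl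

lemma o_rep (e r : T) (k : ℕ) : o (rep e r k) = o r + ω ^ o e * k := by
  induction k with
  | zero => simp [rep]
  | succ k ih => rw [rep, o_oadd, ih, Nat.cast_succ, mul_add_one, add_assoc]

lemma o_fund_lt : ∀ {t : T}, t ≠ zero → ∀ x, o (fund t x) < o t
  | zero, h, _ => absurd rfl h
  | oadd zero r, _, _ => by simp
  | oadd (oadd zero e) r, _, x => by
    rw [fund_oadd_succ, o_rep, o_oadd, o_oadd, o_zero, opow_zero, opow_add_one]
    exact (add_lt_add_iff_left _).mpr
      (mul_lt_mul_of_pos_left (natCast_lt_omega0 x) (opow_pos _ omega0_pos))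
  | oadd (oadd (oadd a b) e) r, _, x => by
    rw [fund_oadd_lim (by simp), o_oadd, o_oadd]
    exact (add_lt_add_iff_left _).mpr
      ((opow_lt_opow_iff_right one_lt_omega0).mpr (o_fund_lt (t := oadd (oadd a b) e) (by simp) x))

lemma fund_ne_zero {e : T} (he : e ≠ zero) (r : T) {x : ℕ} (hx : 1 ≤ x) :
    fund (oadd e r) x ≠ zero := by
  match e, x, hx with
  | zero, _, _ => exact absurd rfl he
  | oadd zero e, x + 1, _ => simp [rep]
  | oadd (oadd _ _) _, _, _ => simp [fund_oadd_lim]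

lemma rep_add (e r : T) (a b : ℕ) : rep e r (a + b) = rep e (rep e r a) b := by
  induction b with
  | zero => rfl
  | succ b ih => rw [← add_assoc, rep, ih, rep]

lemma fund_oadd_addT (e u r : T) (x : ℕ) :
    fund (oadd e (addT u r)) x = addT u (fund (oadd e r) x) := by
  match e with
  | zero => rfl
  | oadd zero e =>
    show rep e (addT u r) x = addT u (rep e r x)
    induction x with
    | zero => rfl
    | succ x ih => rw [rep, ih]; rfl
  | oadd (oadd _ _) _ => rfl

@[elab_as_elim]
theorem fund_induction {P : T → Prop} (zero : P T.zero) (succ : ∀ r, P r → P (oadd T.zero r))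
    (lim : ∀ e r, e ≠ T.zero → (∀ x, P (fund (oadd e r) x)) → P (oadd e r)) (t : T) :
    P t := by
  induction t using (InvImage.wf o wellFounded_lt).induction with
  | _ t ih =>
    match t with
    | .zero => exact zero
    | oadd .zero r => exact succ r (ih r (o_fund_lt (by simp) 0))
    | oadd (oadd e e') r =>
      exact lim _ r (by simp) fun x => ih _ (o_fund_lt (by simp) x)

lemma NF_rep {e r : T} (h : NF (oadd e r)) : ∀ x, NF (rep e r x)
  | 0 => h.2.1
  | 1 => h
  | x + 2 => ⟨h.1, NF_rep h (x + 1), le_rfl⟩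

lemma NF_fund : ∀ {t : T}, NF t → ∀ x, NF (fund t x)
  | zero, _, _ => trivial
  | oadd zero _, h, _ => h.2.1
  | oadd (oadd zero e) r, h, x => by
    refine NF_rep ⟨h.1.2.1, h.2.1, ?_⟩ x
    match r, h with
    | zero, _ => trivial
    | oadd _ _, h => exact le_self_add.trans h.2.2
  | oadd (oadd (oadd a b) e) r, h, x => by
    refine ⟨NF_fund h.1 x, h.2.1, ?_⟩
    match r, h with
    | zero, _ => trivial
    | oadd _ _, h => exact (o_fund_lt (t := oadd (oadd a b) e) (by simp) x).le.trans h.2.2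

lemma cleanup_zero (t : T) : cleanup 0 t = t := by
  cases t <;> simp [cleanup]

lemma toNF_oadd_zero (r : T) : toNF (oadd zero r) = oadd zero (toNF r) := by
  simp [toNF, cleanup_zero]

lemma toNF_of_NF : ∀ {t : T}, NF t → toNF t = t
  | zero, _ => rfl
  | oadd e r, h => by
    rw [toNF, toNF_of_NF h.1, toNF_of_NF h.2.1]
    match r, h with
    | zero, _ => rfl
    | oadd _ _, h => rw [cleanup, if_neg (not_lt.mpr h.2.2)]

def FundStep (x : ℕ) (t s : T) : Prop := t ≠ zero ∧ ∃ m ≤ x, fund t m = s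

lemma reflTransGen_fundStep_oadd (e u : T) (x : ℕ) : ReflTransGen (FundStep x) (oadd e u) u := by
  induction e using fund_induction with
  | zero => exact .single ⟨by simp, 0, x.zero_le, rfl⟩
  | succ r _ => exact .single ⟨by simp, 0, x.zero_le, rfl⟩
  | lim e r he ih => exact .head ⟨by simp, 0, x.zero_le, fund_oadd_lim he r u 0⟩ (ih 0)

lemma reflTransGen_fundStep_rep (e r : T) {a b : ℕ} (h : a ≤ b) (x : ℕ) :
    ReflTransGen (FundStep x) (rep e r b) (rep e r a) := by
  induction b, h using Nat.le_induction with
  | base => exact .refl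
  | succ b _ ih => exact (reflTransGen_fundStep_oadd e _ x).trans ih

lemma fundStep_oadd {w : ℕ} (hw : 1 ≤ w) {a b : T} (h : FundStep w a b) (r : T) :
    FundStep w (oadd a r) (oadd b r) := by
  obtain ⟨ha, m, hm, rfl⟩ := h
  refine ⟨by simp, ?_⟩
  match a, ha with
  | oadd zero _, _ => exact ⟨1, hw, rfl⟩
  | oadd (oadd _ _) _, _ => exact ⟨m, hm, fund_oadd_lim (by simp) _ _ _⟩

/-- Bachmann's property. -/
lemma reflTransGen_fundStep_fund :
    ∀ (t : T) {a b w : ℕ}, a ≤ b → 1 ≤ w →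
      ReflTransGen (FundStep w) (fund t b) (fund t a)
  | zero, _, _, _, _, _ => .refl
  | oadd zero _, _, _, _, _, _ => .refl
  | oadd (oadd zero e) r, _, _, w, hab, _ => reflTransGen_fundStep_rep e r hab w
  | oadd (oadd (oadd e₁ e₂) e) r, _, _, _, hab, hw =>
    ReflTransGen.lift (oadd · r) (fun _ _ h => fundStep_oadd hw h r) _ _
      (reflTransGen_fundStep_fund (oadd (oadd e₁ e₂) e) hab hw)

end T

open T Relation

lemma strictMono_superexp (x : ℕ) : StrictMono (superexp x) :=
  strictMono_nat_of_lt_succ fun _ => Nat.lt_two_pow_self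

lemma superexp_le_superexp {x y m n : ℕ} (hxy : x ≤ y) (hmn : m ≤ n) :
    superexp x m ≤ superexp y n := by
  refine le_trans ?_ ((strictMono_superexp y).monotone hmn)
  clear hmn
  induction m with
  | zero => exact hxy
  | succ m ih => exact Nat.pow_le_pow_right two_pos ih

lemma superexp_two_pow (c k : ℕ) : superexp (2 ^ c) k = superexp c (k + 1) := by
  induction k with
  | zero => rfl
  | succ k ih => rw [superexp, ih]; rfl

lemma two_mul_le_two_pow (a : ℕ) : 2 * a ≤ 2 ^ a := by
  cases a with
  | zero => simp
  | succ a => rw [pow_succ]; have := a.lt_two_pow_self; omega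

lemma superexp_le_iterate {w : ℕ} (hw : 1 ≤ w) (k : ℕ) :
    superexp w k ≤ (fun n => 2 ^ n * n)^[k] w := by
  induction k with
  | zero => rfl
  | succ k ih =>
    rw [Function.iterate_succ_apply']
    have : 1 ≤ (fun n => 2 ^ n * n)^[k] w :=
      hw.trans (((strictMono_superexp w).monotone k.zero_le).trans ih)
    exact (Nat.pow_le_pow_right two_pos ih).trans (Nat.le_mul_of_pos_right _ this)

lemma two_mul_iterate_le_superexp (w k : ℕ) :
    2 * (fun n => 2 ^ n * n)^[k] w ≤ superexp (2 * w) k := by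
  induction k with
  | zero => rfl
  | succ k ih =>
    rw [Function.iterate_succ_apply']
    set a := (fun n => 2 ^ n * n)^[k] w
    calc 2 * (2 ^ a * a) = 2 ^ a * (2 * a) := by ring
      _ ≤ 2 ^ a * 2 ^ a := Nat.mul_le_mul_left _ (two_mul_le_two_pow a)
      _ = 2 ^ (2 * a) := by rw [← pow_add, two_mul]
      _ ≤ 2 ^ superexp (2 * w) k := Nat.pow_le_pow_right two_pos ih

section Hierarchy

variable {G : T → ℕ → ℕ}

theorem monotone_and_le_of_reflTransGen (hzero : Monotone (G zero))
    (hsucc : ∀ r, Monotone (G r) → Monotone (G (oadd zero r)) ∧ G r ≤ G (oadd zero r))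
    (hlim : ∀ e r x, e ≠ zero → G (oadd e r) x = G (fund (oadd e r) x) x) (t : T) :
    Monotone (G t) ∧
      ∀ {x z s}, ReflTransGen (FundStep x) t s → x ≤ z → G s z ≤ G t z := by
  induction t using fund_induction with
  | zero =>
    refine ⟨hzero, fun h _ => ?_⟩
    rcases h.cases_head with rfl | ⟨_, ⟨h0, _⟩, _⟩
    · exact le_rfl
    · exact absurd rfl h0
  | succ r ih =>
    obtain ⟨hmono, hle⟩ := hsucc r ih.1
    refine ⟨hmono, fun {_ z _} h hxz => ?_⟩
    rcases h.cases_head with rfl | ⟨_, ⟨_, _, _, rfl⟩, h⟩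
    · exact le_rfl
    · exact (ih.2 h hxz).trans (hle z)
  | lim e r he ih =>
    have hfund : ∀ {m z}, m ≤ z → G (fund (oadd e r) m) z ≤ G (oadd e r) z := by
      intro m z hmz
      rw [hlim e r z he]
      rcases hmz.lt_or_eq with hmz | rfl
      · exact (ih z).2 (reflTransGen_fundStep_fund _ hmz.le (by omega)) le_rfl
      · exact le_rfl
    refine ⟨fun x y hxy => ?_, fun {_ z _} h hxz => ?_⟩
    · rw [hlim e r x he]
      exact ((ih x).1 hxy).trans (hfund hxy)
    · rcases h.cases_head with rfl | ⟨_, ⟨_, m, hm, rfl⟩, h⟩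
      · exact le_rfl
      · exact ((ih m).2 h hxz).trans (hfund (hm.trans hxz))

end Hierarchy

lemma HG.existsUnique (t : T) (x : ℕ) : ∃! y, HG t x y := by
  induction t using fund_induction generalizing x with
  | zero => exact ⟨x, .zero x, fun _ h => by cases h; rfl⟩
  | succ r ih =>
    obtain ⟨y, hy, huniq⟩ := ih (x + 1)
    refine ⟨y, .succ hy, fun _ h => ?_⟩
    cases h with
    | succ h => exact huniq _ h
    | lim he _ => exact absurd rfl he
  | lim e r he ih =>
    obtain ⟨y, hy, huniq⟩ := ih x x
    refine ⟨y, .lim he hy, fun _ h => ?_⟩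
    cases h with
    | succ _ => exact absurd rfl he
    | lim _ h => exact huniq _ h

noncomputable def hardy (t : T) (x : ℕ) : ℕ := (HG.existsUnique t x).exists.choose

lemma HG_hardy (t : T) (x : ℕ) : HG t x (hardy t x) := (HG.existsUnique t x).exists.choose_spec

lemma HG.hardy_eq {t : T} {x y : ℕ} (h : HG t x y) : hardy t x = y :=
  (HG.existsUnique t x).unique (HG_hardy t x) h

@[simp] lemma hardy_zero (x : ℕ) : hardy zero x = x := (HG.zero x).hardy_eq

lemma hardy_succ (r : T) (x : ℕ) : hardy (oadd zero r) x = hardy r (x + 1) :=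
  (HG.succ (HG_hardy r (x + 1))).hardy_eq

lemma hardy_lim {e : T} (he : e ≠ zero) (r : T) (x : ℕ) :
    hardy (oadd e r) x = hardy (fund (oadd e r) x) x :=
  (HG.lim he (HG_hardy _ x)).hardy_eq

lemma le_hardy (t : T) : id ≤ hardy t := by
  induction t using fund_induction with
  | zero => exact fun x => (hardy_zero x).ge
  | succ r ih => exact fun x => by rw [hardy_succ]; exact x.le_succ.trans (ih _)
  | lim e r he ih => exact fun x => by rw [hardy_lim he]; exact ih x x

lemma monotone_hardy (t : T) : Monotone (hardy t) :=
  (monotone_and_le_of_reflTransGen (fun _ _ h => by simpa using h)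
    (fun r hr => ⟨fun x y h => by simpa only [hardy_succ] using hr (Nat.succ_le_succ h),
      fun x => by rw [hardy_succ]; exact hr x.le_succ⟩)
    (fun _ r x he => hardy_lim he r x) t).1

lemma hardy_addT (u v : T) (z : ℕ) : hardy (addT u v) z = hardy u (hardy v z) := by
  induction v using fund_induction generalizing z with
  | zero => simp [addT]
  | succ r ih => rw [addT, hardy_succ, hardy_succ, ih]
  | lim e r he ih => rw [addT, hardy_lim he, hardy_lim he, fund_oadd_addT, ih]

lemma hardy_rep (β : T) (k z : ℕ) : hardy (rep β zero k) z = (hardy (oadd β zero))^[k] z := by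
  induction k generalizing z with
  | zero => simp [rep]
  | succ k ih => exact (hardy_addT (rep β zero k) (oadd β zero) z).trans (ih _)

lemma hardy_omega_pow_succ (β : T) :
    hardy (oadd (oadd zero β) zero) = fun z => (hardy (oadd β zero))^[z] z :=
  funext fun z => (hardy_lim (by simp) zero z).trans (hardy_rep β z z)

lemma FGit.existsUnique {t : T} (ht : ∀ x, ∃! y, FG t x y) (k z : ℕ) :
    ∃! y, FGit t k z y := by
  induction k with
  | zero => exact ⟨z, .zero t z, fun _ h => by cases h; rfl⟩
  | succ k ih =>
    obtain ⟨w, hw, hw_uniq⟩ := ih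
    obtain ⟨y, hy, hy_uniq⟩ := ht w
    refine ⟨y, .succ hw hy, fun _ h => ?_⟩
    cases h with
    | succ hw' hy' =>
      obtain rfl := hw_uniq _ hw'
      exact hy_uniq _ hy'

lemma FG.existsUnique (t : T) (x : ℕ) : ∃! y, FG t x y := by
  induction t using fund_induction generalizing x with
  | zero => exact ⟨_, .zero x, fun _ h => by cases h; rfl⟩
  | succ r ih =>
    obtain ⟨y, hy, huniq⟩ := FGit.existsUnique ih x x
    refine ⟨y, .succ hy, fun _ h => ?_⟩
    cases h with
    | succ h => exact huniq _ h
    | lim he _ => exact absurd rfl he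
  | lim e r he ih =>
    obtain ⟨y, hy, huniq⟩ := ih x x
    refine ⟨y, .lim he hy, fun _ h => ?_⟩
    cases h with
    | succ _ => exact absurd rfl he
    | lim _ h => exact huniq _ h

noncomputable def fastGrowing (t : T) (x : ℕ) : ℕ := (FG.existsUnique t x).exists.choose

lemma FG_fastGrowing (t : T) (x : ℕ) : FG t x (fastGrowing t x) :=
  (FG.existsUnique t x).exists.choose_spec

lemma FG.fastGrowing_eq {t : T} {x y : ℕ} (h : FG t x y) : fastGrowing t x = y :=
  (FG.existsUnique t x).unique (FG_fastGrowing t x) h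

lemma FGit_fastGrowing_iterate (t : T) (k z : ℕ) : FGit t k z ((fastGrowing t)^[k] z) := by
  induction k with
  | zero => exact .zero t z
  | succ k ih => rw [Function.iterate_succ_apply']; exact .succ ih (FG_fastGrowing t _)

lemma fastGrowing_zero (x : ℕ) : fastGrowing zero x = superexp x x := (FG.zero x).fastGrowing_eq

lemma fastGrowing_succ (r : T) (x : ℕ) : fastGrowing (oadd zero r) x = (fastGrowing r)^[x] x :=
  (FG.succ (FGit_fastGrowing_iterate r x x)).fastGrowing_eq

lemma fastGrowing_lim {e : T} (he : e ≠ zero) (r : T) (x : ℕ) :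
    fastGrowing (oadd e r) x = fastGrowing (fund (oadd e r) x) x :=
  (FG.lim he (FG_fastGrowing _ x)).fastGrowing_eq

@[simp] lemma fastGrowing_apply_zero (t : T) : fastGrowing t 0 = 0 := by
  induction t using fund_induction with
  | zero => rw [fastGrowing_zero]; rfl
  | succ r _ => rw [fastGrowing_succ]; rfl
  | lim e r he ih => rw [fastGrowing_lim he, ih]

lemma le_fastGrowing (t : T) : id ≤ fastGrowing t := by
  induction t using fund_induction with
  | zero => exact fun x => by rw [fastGrowing_zero]; exact (strictMono_superexp x).le_apply
  | succ r ih =>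
    exact fun x => by rw [fastGrowing_succ]; exact Function.id_le_iterate_of_id_le ih x x
  | lim e r he ih => exact fun x => by rw [fastGrowing_lim he]; exact ih x x

lemma monotone_and_le_of_reflTransGen_fastGrowing (t : T) :
    Monotone (fastGrowing t) ∧ ∀ {x z s}, ReflTransGen (FundStep x) t s → x ≤ z →
      fastGrowing s z ≤ fastGrowing t z := by
  refine monotone_and_le_of_reflTransGen (fun x y h => ?_) (fun r hr => ⟨fun x y h => ?_, ?_⟩)
    (fun _ r x he => fastGrowing_lim he r x) t
  · simpa only [fastGrowing_zero] using superexp_le_superexp h h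
  · simp only [fastGrowing_succ]
    exact ((hr.iterate x) h).trans
      (Function.monotone_iterate_of_id_le (le_fastGrowing r) h y)
  · rintro (_ | x)
    · simp
    · rw [fastGrowing_succ]
      exact Function.monotone_iterate_of_id_le (le_fastGrowing r) (Nat.le_add_left 1 x) _

lemma monotone_fastGrowing (t : T) : Monotone (fastGrowing t) :=
  (monotone_and_le_of_reflTransGen_fastGrowing t).1

lemma fastGrowing_le_of_reflTransGen {x z : ℕ} {s t : T} (h : ReflTransGen (FundStep x) t s)
    (hxz : x ≤ z) : fastGrowing s z ≤ fastGrowing t z :=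
  (monotone_and_le_of_reflTransGen_fastGrowing t).2 h hxz

noncomputable def threeAdd (t : T) : T := toNF (addT three t)

lemma wexp3_eq (t : T) : wexp3 t = oadd (threeAdd t) zero := rfl

lemma threeAdd_zero : threeAdd zero = three := by
  simp [threeAdd, addT, three, toNF, cleanup_zero]

lemma threeAdd_succ (r : T) : threeAdd (oadd zero r) = oadd zero (threeAdd r) :=
  toNF_oadd_zero _

lemma threeAdd_rep_zero (r : T) (n : ℕ) : threeAdd (rep zero r n) = rep zero (threeAdd r) n := by
  induction n with
  | zero => rfl
  | succ n ih => rw [rep, threeAdd_succ, ih, rep]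

lemma threeAdd_of_ne_zero :
    ∀ {e r : T}, NF (oadd e r) → e ≠ zero → threeAdd (oadd e r) = oadd e r
  | e, zero, h, he => by
    have hthree : cleanup (o e) three = zero := by simp [three, cleanup, o_pos he]
    change oadd (toNF e) (cleanup (o e) (threeAdd zero)) = _
    rw [threeAdd_zero, toNF_of_NF h.1, hthree]
  | e, oadd f s, h, he => by
    change oadd (toNF e) (cleanup (o e) (threeAdd (oadd f s))) = _
    rw [threeAdd_of_ne_zero h.2.1 (ne_zero_of_o_le he h.2.2), toNF_of_NF h.1, cleanup,
      if_neg (not_lt.mpr h.2.2)]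

lemma threeAdd_fund {e r : T} (h : NF (oadd e r)) (he : e ≠ zero)
    (hω : oadd e r ≠ oadd (oadd zero zero) zero) {m : ℕ} (hm : 1 ≤ m) :
    threeAdd (fund (oadd e r) m) = fund (oadd e r) m := by
  match e, r, m, hm with
  | oadd zero zero, zero, _, _ => exact absurd rfl hω
  | oadd zero zero, oadd _ _, _, _ =>
    rw [fund_oadd_succ, threeAdd_rep_zero, threeAdd_of_ne_zero h.2.1 (ne_zero_of_o_le he h.2.2)]
  | oadd zero (oadd _ _), _, k + 1, _ => exact threeAdd_of_ne_zero (NF_fund h (k + 1)) (by simp)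
  | oadd (oadd _ _) _, _, _, hm =>
    exact threeAdd_of_ne_zero (NF_fund h _) (fund_ne_zero (by simp) _ hm)

lemma hardy_omega_pow_three : hardy (oadd three zero) = fun z => (fun n => 2 ^ n * n)^[z] z := by
  have h1 : hardy (oadd zero zero) = (· + 1) := funext fun x => by rw [hardy_succ, hardy_zero]
  have h2 : hardy (oadd (oadd zero zero) zero) = (2 * ·) := by
    rw [hardy_omega_pow_succ, h1]
    funext z
    simp [two_mul]
  rw [three, hardy_omega_pow_succ, hardy_omega_pow_succ, h2]
  simp

/-- The slack `+ 3` and `+ 1` is what lets the successor step iterate the bounds. -/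
def HardyBounds (α : T) : Prop :=
  ∀ x, fastGrowing α x + 3 ≤ hardy (wexp3 α) (x + 3) ∧
    hardy (wexp3 α) (x + 3) + 1 ≤ fastGrowing α (x + 4)

lemma hardyBounds_zero : HardyBounds zero := by
  intro x
  rw [fastGrowing_zero, fastGrowing_zero, wexp3_eq, threeAdd_zero, hardy_omega_pow_three]
  set g := fun w : ℕ => 2 ^ w * w
  have hge : x + 3 ≤ g^[x + 3] (x + 3) :=
    Function.id_le_iterate_of_id_le (fun w => Nat.le_mul_of_pos_left w (by positivity)) _ _
  constructor
  · calc superexp x x + 3 ≤ superexp x (x + 3) := by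
          simpa [add_comm] using (strictMono_superexp x).add_le_nat 3 x
      _ ≤ superexp (x + 3) (x + 3) := superexp_le_superexp (by omega) le_rfl
      _ ≤ g^[x + 3] (x + 3) := superexp_le_iterate (by omega) _
  · calc g^[x + 3] (x + 3) + 1 ≤ 2 * g^[x + 3] (x + 3) := by omega
      _ ≤ superexp (2 * (x + 3)) (x + 3) := two_mul_iterate_le_superexp _ _
      _ ≤ superexp (2 ^ (x + 4)) (x + 3) :=
          superexp_le_superexp ((by omega : 2 * (x + 3) ≤ 2 * (x + 4)).trans
            (two_mul_le_two_pow _)) le_rfl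
      _ = superexp (x + 4) (x + 4) := superexp_two_pow _ _

lemma hardyBounds_succ {r : T} (h : HardyBounds r) : HardyBounds (oadd zero r) := by
  intro x
  set G := hardy (wexp3 r)
  set f := fastGrowing r
  have hG : hardy (wexp3 (oadd zero r)) = fun z => G^[z] z := by
    rw [wexp3_eq, threeAdd_succ, hardy_omega_pow_succ]; rfl
  have hG_id : id ≤ G := le_hardy _
  rw [hG, fastGrowing_succ, fastGrowing_succ]
  constructor
  · have hiter := (monotone_hardy (wexp3 r)).le_iterate_comp_of_le (h := (· + 3)) (g := f)
      (fun w => (h w).1) x x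
    exact hiter.trans (Function.monotone_iterate_of_id_le hG_id (by omega) _)
  · have hiter : ∀ k, G^[k] (x + 3) + 1 ≤ f^[k] (x + 4) := by
      intro k
      induction k with
      | zero => rfl
      | succ k ih =>
        rw [Function.iterate_succ_apply', Function.iterate_succ_apply']
        obtain ⟨y, hy⟩ : ∃ y, G^[k] (x + 3) = y + 3 :=
          Nat.exists_eq_add_of_le' ((by omega : 3 ≤ x + 3).trans
            (Function.id_le_iterate_of_id_le hG_id k _))
        rw [hy] at ih ⊢
        exact (h y).2.trans (monotone_fastGrowing r ih)
    exact (hiter (x + 3)).trans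
      (Function.monotone_iterate_of_id_le (le_fastGrowing r) (by omega) _)

lemma hardyBounds_lim {e r : T} (hNF : NF (oadd e r)) (he : e ≠ zero)
    (ih : ∀ m, HardyBounds (fund (oadd e r) m)) : HardyBounds (oadd e r) := by
  intro x
  suffices ∃ δ, HardyBounds δ ∧
      hardy (wexp3 (oadd e r)) (x + 3) = hardy (wexp3 δ) (x + 3) ∧
      fastGrowing (oadd e r) x ≤ fastGrowing δ x ∧
      fastGrowing δ (x + 4) ≤ fastGrowing (oadd e r) (x + 4) by
    obtain ⟨δ, hδ, hH, hlo, hhi⟩ := this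
    have := hδ x
    omega
  have hH : hardy (wexp3 (oadd e r)) (x + 3) =
      hardy (oadd (fund (oadd e r) (x + 3)) zero) (x + 3) := by
    rw [wexp3_eq, threeAdd_of_ne_zero hNF he, hardy_lim (by simp), fund_oadd_lim he]
  rw [fastGrowing_lim he _ (x + 4)]
  by_cases hω : oadd e r = oadd (oadd zero zero) zero
  · obtain ⟨rfl, rfl⟩ := T.oadd.inj hω
    refine ⟨rep zero zero x, ih x, ?_, (fastGrowing_lim he _ x).le,
      fastGrowing_le_of_reflTransGen (reflTransGen_fundStep_rep _ _ (by omega) _) le_rfl⟩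
    rw [hH, wexp3_eq, threeAdd_rep_zero, threeAdd_zero, three, fund_oadd_succ, add_comm,
      rep_add]
    rfl
  · refine ⟨fund (oadd e r) (x + 3), ih _, ?_, ?_,
      fastGrowing_le_of_reflTransGen (reflTransGen_fundStep_fund _ (by omega) (by omega)) le_rfl⟩
    · rw [hH, wexp3_eq, threeAdd_fund hNF he hω (by omega)]
    · rcases Nat.eq_zero_or_pos x with rfl | hx
      · simp
      · rw [fastGrowing_lim he]
        exact fastGrowing_le_of_reflTransGen (reflTransGen_fundStep_fund _ (by omega) hx) le_rfl

theorem hardyBounds {α : T} (h : NF α) : HardyBounds α := by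
  induction α using fund_induction with
  | zero => exact hardyBounds_zero
  | succ r ih => exact hardyBounds_succ (ih h.2.1)
  | lim e r he ih => exact hardyBounds_lim h he fun m => ih m (NF_fund h m)

/-- For every ordinal `α < ε₀` (given by its Cantor normal
form term): if `F_α` is total then `H_{ω^{3+α}}` is total, and
`F_α(x) ≤ H_{ω^{3+α}}(x+3) ≤ F_α(x+4)` for all `x`, whenever defined. -/
theorem fastGrowing_hardy_comparison (α : T) (hα : T.NF α) :
    ((∀ x, ∃ y, FG α x y) → ∀ x, ∃ z, HG (wexp3 α) x z) ∧
    (∀ x y z, FG α x y → HG (wexp3 α) (x + 3) z → y ≤ z) ∧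
    (∀ x z w, HG (wexp3 α) (x + 3) z → FG α (x + 4) w → z ≤ w) := by
  refine ⟨fun _ x => ⟨_, HG_hardy _ x⟩, fun x y z hF hH => ?_, fun x z w hH hF => ?_⟩
  · have := (hardyBounds hα x).1
    rw [hF.fastGrowing_eq, hH.hardy_eq] at this
    omega
  · have := (hardyBounds hα x).2
    rw [hF.fastGrowing_eq, hH.hardy_eq] at this
    omega
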